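/- arXiv:math/0110240 — 6 statements merged into one kernel-verified Lean document; each statement's English description precedes it below -/
import Mathlib

section
/- For every n ≥ 4, the number of distinct collections of 4-element subsets of {0,1,…,n} that arise as {σ(F) : F a facet of S(I)} for some permutation σ of {0,1,…,n} and some order ideal I' of F₃(n) with max ⋃ I' = n (where I = {{0} ∪ f : f ∈ I'}) is at most 2^{n−4}·(n+1)!. That is, there are at most 2^{n−4}·(n+1)! squeezed 3-spheres with n+1 labeled vertices. -/
/-- The 4-element set `{i, i+1, j, j+1}`, denoted `(i,j)` in the paper. -/
def pairSet (i j : ℕ) : Finset ℕ := {i, i + 1, j, j + 1}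

/-- Membership in the collection `F₃(n)` of 4-element subsets of `{1,…,n}`
of the form `{i, i+1, j, j+1}` with `1 ≤ i`, `i+2 ≤ j`, `j+1 ≤ n`. -/
def memF3 (n : ℕ) (f : Finset ℕ) : Prop :=
  ∃ i j : ℕ, 1 ≤ i ∧ i + 2 ≤ j ∧ j + 1 ≤ n ∧ f = pairSet i j

/-- The partial order `⪯` on finite subsets of `ℕ` of equal cardinality:
componentwise comparison of the increasingly sorted lists of elements. -/
def squeezedLE (f g : Finset ℕ) : Prop :=
  List.Forall₂ (· ≤ ·) (f.sort (· ≤ ·)) (g.sort (· ≤ ·))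

/-- `I` is an order ideal of `F₃(n)` w.r.t. `⪯`. -/
def IsIdealF3 (n : ℕ) (I : Set (Finset ℕ)) : Prop :=
  (∀ f ∈ I, memF3 n f) ∧
  ∀ f g : Finset ℕ, memF3 n f → g ∈ I → squeezedLE f g → f ∈ I

/-- `max ⋃ I`, the largest vertex used by the collection `I`. -/
noncomputable def maxVertex (I : Set (Finset ℕ)) : ℕ :=
  sSup (⋃ f ∈ I, (f : Set ℕ))

/-- `0 * K = {{0} ∪ f : f ∈ K}`. -/
def coneZero (K : Set (Finset ℕ)) : Set (Finset ℕ) := (insert 0) '' K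

/-- A facet of the squeezed sphere `S(I)`: a 4-element set contained in
exactly one member of `I`. -/
def isFacetOfS (I : Set (Finset ℕ)) (F : Finset ℕ) : Prop :=
  F.card = 4 ∧ ∃! g, g ∈ I ∧ F ⊆ g

/-- The gap of `(i,j) = {i, i+1, j, j+1}`, i.e. `j - i - 2`. -/
def gapOf (f : Finset ℕ) : ℕ :=
  f.sup id - (f.sort (· ≤ ·)).headI - 3

/-- The collections of 4-element subsets of `{0,…,n}` arising as the relabeled
facet set `{σ(F) : F a facet of S(I)}` of a squeezed 3-sphere `S(I)`, for some
permutation `σ` of `{0,…,n}` and some order ideal `I'` of `F₃(n)` with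
`max ⋃ I' = n` (and `I = 0 * I'`). -/
def labeledSqueezedSpheres (n : ℕ) : Set (Set (Finset ℕ)) :=
  {C | ∃ (I' : Set (Finset ℕ)) (σ : Equiv.Perm ℕ),
    IsIdealF3 n I' ∧ maxVertex I' = n ∧ (∀ x : ℕ, x ≤ n → σ x ≤ n) ∧
    C = {G | ∃ F : Finset ℕ, isFacetOfS (coneZero I') F ∧ G = F.image σ}}

/-! An order ideal `I` of `F₃(n)` is determined by its column profile
`m j = max {i : (i, j) ∈ I}`. Downward closure forces columns `3, …, p` to be full
(`m j = j - 2`) and the columns `p < j ≤ n - 1` to be nonempty, non-full and weakly decreasing,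
column `n - 1` being nonempty because `max ⋃ I = n`. So `k ↦ m (n - 1 - k) + k` is strictly
increasing on `k < n - 1 - p` with values in `{1, …, n - 4}`, and its image determines the
profile: there are at most `2 ^ (n - 4)` such ideals. A labeled sphere is determined by the ideal
and the restriction of `σ` to `{0, …, n}`, an injection of `{0, …, n}` into itself. -/

lemma mem_pairSet {i j x : ℕ} : x ∈ pairSet i j ↔ x = i ∨ x = i + 1 ∨ x = j ∨ x = j + 1 := by
  simp [pairSet]

lemma sort_pairSet {i j : ℕ} (h : i + 1 < j) :
    (pairSet i j).sort (· ≤ ·) = [i, i + 1, j, j + 1] := by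
  have hlist : pairSet i j = [i, i + 1, j, j + 1].toFinset := by simp [pairSet]
  rw [hlist, List.toFinset_sort] <;> simp <;> omega

lemma squeezedLE_pairSet {i j i' j' : ℕ} (hij : i + 1 < j) (hij' : i' + 1 < j')
    (hi : i ≤ i') (hj : j ≤ j') : squeezedLE (pairSet i j) (pairSet i' j') := by
  rw [squeezedLE, sort_pairSet hij, sort_pairSet hij']
  simp only [List.forall₂_cons]
  exact ⟨hi, by omega, hj, by omega, .nil⟩

lemma pairSet_inj {i j i' j' : ℕ} (hij : i + 1 < j) (hij' : i' + 1 < j')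
    (h : pairSet i j = pairSet i' j') : i = i' ∧ j = j' := by
  have hsort := congrArg (Finset.sort · (· ≤ ·)) h
  simp only [sort_pairSet hij, sort_pairSet hij', List.cons.injEq] at hsort
  exact ⟨hsort.1, hsort.2.2.1⟩

section ColumnMax

open Classical

/-- `0` encodes an empty column. -/
noncomputable def columnMax (I : Set (Finset ℕ)) (j : ℕ) : ℕ :=
  Nat.findGreatest (fun i => pairSet i j ∈ I) (j - 2)

lemma le_columnMax {I : Set (Finset ℕ)} {i j : ℕ} (h : pairSet i j ∈ I) (hij : i + 2 ≤ j) :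
    i ≤ columnMax I j :=
  Nat.le_findGreatest (by omega) h

lemma columnMax_add_two_le (I : Set (Finset ℕ)) (j : ℕ) (h : columnMax I j ≠ 0) :
    columnMax I j + 2 ≤ j := by
  have := Nat.findGreatest_le (P := fun i => pairSet i j ∈ I) (j - 2)
  unfold columnMax at h ⊢
  omega

lemma pairSet_columnMax_mem {I : Set (Finset ℕ)} {j : ℕ} (h : columnMax I j ≠ 0) :
    pairSet (columnMax I j) j ∈ I :=
  Nat.findGreatest_of_ne_zero rfl h

end ColumnMax

namespace IsIdealF3

variable {n : ℕ} {I : Set (Finset ℕ)}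

lemma le_of_mem (hI : IsIdealF3 n I) {f : Finset ℕ} (hf : f ∈ I) {x : ℕ} (hx : x ∈ f) :
    x ≤ n := by
  obtain ⟨i, j, -, hij, hjn, rfl⟩ := hI.1 f hf
  rw [mem_pairSet] at hx
  omega

lemma bounds_of_pairSet_mem (hI : IsIdealF3 n I) {i j : ℕ} (h : pairSet i j ∈ I)
    (hij : i + 2 ≤ j) : 1 ≤ i ∧ j + 1 ≤ n := by
  obtain ⟨a, b, ha, hab, hbn, heq⟩ := hI.1 _ h
  obtain ⟨rfl, rfl⟩ := pairSet_inj (by omega) (by omega) heq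
  exact ⟨ha, hbn⟩

lemma pairSet_mem_of_le (hI : IsIdealF3 n I) {i j i' j' : ℕ} (h : pairSet i' j' ∈ I)
    (hij' : i' + 2 ≤ j') (hi : 1 ≤ i) (hij : i + 2 ≤ j) (hii' : i ≤ i') (hjj' : j ≤ j') :
    pairSet i j ∈ I := by
  have hj'n := (hI.bounds_of_pairSet_mem h hij').2
  exact hI.2 _ _ ⟨i, j, hi, hij, by omega, rfl⟩ h
    (squeezedLE_pairSet (by omega) (by omega) hii' hjj')

lemma pairSet_mem_iff (hI : IsIdealF3 n I) {i j : ℕ} (hi : 1 ≤ i) (hij : i + 2 ≤ j) :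
    pairSet i j ∈ I ↔ i ≤ columnMax I j := by
  refine ⟨fun h => le_columnMax h hij, fun hle => ?_⟩
  have hne : columnMax I j ≠ 0 := by omega
  exact hI.pairSet_mem_of_le (pairSet_columnMax_mem hne) (columnMax_add_two_le I j hne)
    hi hij hle le_rfl

lemma subset_of_columnMax_le {n' : ℕ} {I' : Set (Finset ℕ)} (hI : IsIdealF3 n I)
    (hI' : IsIdealF3 n' I') (h : ∀ j, columnMax I j ≤ columnMax I' j) : I ⊆ I' := by
  intro f hf
  obtain ⟨i, j, hi, hij, -, rfl⟩ := hI.1 f hf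
  exact (hI'.pairSet_mem_iff hi hij).2 ((le_columnMax hf hij).trans (h j))

lemma eq_of_columnMax_eq {n' : ℕ} {I' : Set (Finset ℕ)} (hI : IsIdealF3 n I)
    (hI' : IsIdealF3 n' I') (h : columnMax I = columnMax I') : I = I' :=
  (hI.subset_of_columnMax_le hI' (by simp [h])).antisymm
    (hI'.subset_of_columnMax_le hI (by simp [h]))

lemma exists_pairSet_top_mem (hI : IsIdealF3 n I) (hmax : maxVertex I = n) (hn : 0 < n) :
    ∃ i, 1 ≤ i ∧ i + 2 ≤ n - 1 ∧ pairSet i (n - 1) ∈ I := by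
  have hbdd : BddAbove (⋃ f ∈ I, (f : Set ℕ)) :=
    ⟨n, fun x hx => by
      obtain ⟨f, hf, hx⟩ := Set.mem_iUnion₂.1 hx
      exact hI.le_of_mem hf hx⟩
  have hne : (⋃ f ∈ I, (f : Set ℕ)).Nonempty := by
    by_contra hempty
    rw [Set.not_nonempty_iff_eq_empty] at hempty
    rw [maxVertex, hempty, csSup_empty] at hmax
    exact hn.ne hmax
  have hmem := Nat.sSup_mem hne hbdd
  rw [← maxVertex, hmax] at hmem
  obtain ⟨f, hf, hnf⟩ := Set.mem_iUnion₂.1 hmem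
  obtain ⟨i, j, hi, hij, hjn, rfl⟩ := hI.1 f hf
  have hj : j = n - 1 := by rw [Finset.mem_coe, mem_pairSet] at hnf; omega
  exact ⟨i, hi, by omega, hj ▸ hf⟩

end IsIdealF3

theorem StrictMonoOn.eqOn_of_image_Iio_eq {α : Type*} [Preorder α] {f g : ℕ → α} {r : ℕ}
    (hf : StrictMonoOn f (Set.Iio r)) (hg : StrictMonoOn g (Set.Iio r))
    (h : f '' Set.Iio r = g '' Set.Iio r) : Set.EqOn f g (Set.Iio r) := by
  have hf' : StrictMono (f ∘ Fin.val : Fin r → α) := fun a b hab => hf a.isLt b.isLt hab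
  have hg' : StrictMono (g ∘ Fin.val : Fin r → α) := fun a b hab => hg a.isLt b.isLt hab
  have hfg := (hf'.range_inj hg').1 (by rwa [Set.range_comp, Set.range_comp, Fin.range_val])
  exact fun k hk => congrFun hfg ⟨k, hk⟩

structure IsColumnProfile (n : ℕ) (m : ℕ → ℕ) : Prop where
  support : ∀ j, m j ≠ 0 → 3 ≤ j ∧ j + 1 ≤ n ∧ m j + 2 ≤ j
  top_ne_zero : m (n - 1) ≠ 0
  step : ∀ j, min (m (j + 1)) (j - 2) ≤ m j

lemma IsIdealF3.isColumnProfile {n : ℕ} {I : Set (Finset ℕ)} (hI : IsIdealF3 n I)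
    (hmax : maxVertex I = n) (hn : 0 < n) : IsColumnProfile n (columnMax I) where
  support j hj := by
    have hj2 := columnMax_add_two_le I j hj
    have := hI.bounds_of_pairSet_mem (pairSet_columnMax_mem hj) hj2
    omega
  top_ne_zero := by
    obtain ⟨i, hi, hin, hmem⟩ := hI.exists_pairSet_top_mem hmax hn
    have := le_columnMax hmem hin
    omega
  step j := by
    rcases Nat.eq_zero_or_pos (min (columnMax I (j + 1)) (j - 2)) with hzero | hpos
    · omega
    have hne : columnMax I (j + 1) ≠ 0 := by omega
    have hmem := hI.pairSet_mem_of_le (pairSet_columnMax_mem hne)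
      (columnMax_add_two_le I _ hne) hpos (by omega) (min_le_left _ _) (Nat.le_succ j)
    exact le_columnMax hmem (by omega)

/-- Column `j` is full when `m j = j - 2`, its largest possible value. -/
def lastFull (n : ℕ) (m : ℕ → ℕ) : ℕ :=
  Nat.findGreatest (fun j => 3 ≤ j ∧ m j + 2 = j) (n - 1)

def shiftedColumn (n : ℕ) (m : ℕ → ℕ) (k : ℕ) : ℕ :=
  m (n - 1 - k) + k

def profileCode (n : ℕ) (m : ℕ → ℕ) : Finset ℕ :=
  (Finset.range (n - 1 - lastFull n m)).image (shiftedColumn n m)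

namespace IsColumnProfile

variable {n : ℕ} {m : ℕ → ℕ}

lemma four_le (h : IsColumnProfile n m) : 4 ≤ n := by
  have := h.support _ h.top_ne_zero
  omega

lemma eq_zero_of_not_mem (h : IsColumnProfile n m) {j : ℕ} (hj : ¬(3 ≤ j ∧ j + 1 ≤ n)) :
    m j = 0 := by
  by_contra hne
  have := h.support j hne
  omega

lemma ne_zero (h : IsColumnProfile n m) {j : ℕ} (h3 : 3 ≤ j) (hjn : j + 1 ≤ n) : m j ≠ 0 := by
  refine Nat.decreasingInduction' (P := fun k => m k ≠ 0) (fun k _ hjk hk => ?_)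
    (show j ≤ n - 1 by omega) h.top_ne_zero
  have := h.step k
  omega

lemma full_three (h : IsColumnProfile n m) : m 3 + 2 = 3 := by
  have hne := h.ne_zero le_rfl (by have := h.four_le; omega)
  have := h.support 3 hne
  omega

lemma three_le_lastFull (h : IsColumnProfile n m) : 3 ≤ lastFull n m :=
  Nat.le_findGreatest (by have := h.four_le; omega) ⟨le_rfl, h.full_three⟩

lemma lastFull_lt (h : IsColumnProfile n m) : lastFull n m < n := by
  have : lastFull n m ≤ n - 1 := Nat.findGreatest_le _
  have := h.four_le
  omega

lemma full_of_le_lastFull (h : IsColumnProfile n m) {j : ℕ} (h3 : 3 ≤ j)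
    (hj : j ≤ lastFull n m) : m j + 2 = j := by
  have hfull : 3 ≤ lastFull n m ∧ m (lastFull n m) + 2 = lastFull n m :=
    Nat.findGreatest_spec (P := fun j => 3 ≤ j ∧ m j + 2 = j) (m := 3)
      (by have := h.four_le; omega) ⟨le_rfl, h.full_three⟩
  refine Nat.decreasingInduction' (P := fun k => m k + 2 = k) (fun k _ hjk hk => ?_) hj hfull.2
  have := h.step k
  have := h.support k (by omega)
  omega

lemma not_full_of_lastFull_lt (h : IsColumnProfile n m) {j : ℕ} (hj : lastFull n m < j)
    (hjn : j + 1 ≤ n) : m j ≠ 0 ∧ m j + 3 ≤ j := by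
  have hnot : ¬(3 ≤ j ∧ m j + 2 = j) := Nat.findGreatest_is_greatest hj (by omega)
  have := h.three_le_lastFull
  have hne := h.ne_zero (j := j) (by omega) hjn
  have := h.support j hne
  exact ⟨hne, by omega⟩

lemma antitoneOn_tail (h : IsColumnProfile n m) :
    AntitoneOn m (Set.Ioc (lastFull n m) (n - 1)) := by
  refine antitoneOn_of_succ_le Set.ordConnected_Ioc fun j _ hj hj' => ?_
  simp only [Order.succ_eq_add_one, Set.mem_Ioc] at hj hj' ⊢
  have := h.not_full_of_lastFull_lt (j := j + 1) (by omega) (by omega)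
  have := h.step j
  omega

lemma strictMonoOn_shiftedColumn (h : IsColumnProfile n m) :
    StrictMonoOn (shiftedColumn n m) (Set.Iio (n - 1 - lastFull n m)) := by
  intro k hk k' hk' hkk'
  simp only [Set.mem_Iio] at hk hk'
  have := h.antitoneOn_tail (a := n - 1 - k') (b := n - 1 - k)
    (by simp only [Set.mem_Ioc]; omega) (by simp only [Set.mem_Ioc]; omega) (by omega)
  simp only [shiftedColumn]
  omega

lemma card_profileCode (h : IsColumnProfile n m) :
    (profileCode n m).card = n - 1 - lastFull n m := by
  rw [profileCode, Finset.card_image_of_injOn, Finset.card_range]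
  simpa only [Finset.coe_range] using h.strictMonoOn_shiftedColumn.injOn

lemma profileCode_subset (h : IsColumnProfile n m) : profileCode n m ⊆ Finset.Icc 1 (n - 4) := by
  intro x hx
  simp only [profileCode, Finset.mem_image, Finset.mem_range] at hx
  obtain ⟨k, hk, rfl⟩ := hx
  have := h.not_full_of_lastFull_lt (j := n - 1 - k) (by omega) (by omega)
  simp only [shiftedColumn, Finset.mem_Icc]
  omega

lemma eq_of_profileCode_eq {m' : ℕ → ℕ} (h : IsColumnProfile n m) (h' : IsColumnProfile n m')
    (hcode : profileCode n m = profileCode n m') : m = m' := by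
  have hp : lastFull n m = lastFull n m' := by
    have := congrArg Finset.card hcode
    rw [h.card_profileCode, h'.card_profileCode] at this
    have := h.lastFull_lt
    have := h'.lastFull_lt
    omega
  have htail := h.strictMonoOn_shiftedColumn.eqOn_of_image_Iio_eq
    (hp ▸ h'.strictMonoOn_shiftedColumn)
    (by simpa only [profileCode, Finset.coe_image, Finset.coe_range, hp] using
      congrArg (fun s : Finset ℕ => (s : Set ℕ)) hcode)
  funext j
  by_cases hj : 3 ≤ j ∧ j + 1 ≤ n
  · rcases le_or_gt j (lastFull n m) with hle | hlt
    · have := h.full_of_le_lastFull hj.1 hle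
      have := h'.full_of_le_lastFull hj.1 (hp ▸ hle)
      omega
    · have := htail (x := n - 1 - j) (by simp only [Set.mem_Iio]; omega)
      simp only [shiftedColumn, show n - 1 - (n - 1 - j) = j by omega] at this
      omega
  · rw [h.eq_zero_of_not_mem hj, h'.eq_zero_of_not_mem hj]

end IsColumnProfile

def squeezedIdeals (n : ℕ) : Set (Set (Finset ℕ)) :=
  {I | IsIdealF3 n I ∧ maxVertex I = n}

section SqueezedIdeals

variable {n : ℕ}

lemma mapsTo_profileCode_squeezedIdeals (hn : 0 < n) :
    Set.MapsTo (fun I => profileCode n (columnMax I)) (squeezedIdeals n)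
      ((Finset.Icc 1 (n - 4)).powerset : Set (Finset ℕ)) := fun _ hI =>
  Finset.mem_powerset.2 (hI.1.isColumnProfile hI.2 hn).profileCode_subset

lemma injOn_profileCode_squeezedIdeals (hn : 0 < n) :
    Set.InjOn (fun I => profileCode n (columnMax I)) (squeezedIdeals n) := fun _ hI _ hI' h =>
  hI.1.eq_of_columnMax_eq hI'.1 <|
    (hI.1.isColumnProfile hI.2 hn).eq_of_profileCode_eq (hI'.1.isColumnProfile hI'.2 hn) h

lemma finite_squeezedIdeals (hn : 0 < n) : (squeezedIdeals n).Finite :=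
  Set.Finite.of_injOn (mapsTo_profileCode_squeezedIdeals hn)
    (injOn_profileCode_squeezedIdeals hn) (Finset.finite_toSet _)

lemma ncard_squeezedIdeals_le (hn : 0 < n) : (squeezedIdeals n).ncard ≤ 2 ^ (n - 4) := by
  refine (Set.ncard_le_ncard_of_injOn _ (mapsTo_profileCode_squeezedIdeals hn)
    (injOn_profileCode_squeezedIdeals hn) (Finset.finite_toSet _)).trans_eq ?_
  rw [Set.ncard_coe_finset, Finset.card_powerset, Nat.card_Icc, Nat.add_sub_cancel]

end SqueezedIdeals

def relabeledFacets (I : Set (Finset ℕ)) (σ : ℕ → ℕ) : Set (Finset ℕ) :=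
  {G | ∃ F : Finset ℕ, isFacetOfS (coneZero I) F ∧ G = F.image σ}

lemma IsIdealF3.le_of_mem_facet {n : ℕ} {I : Set (Finset ℕ)} (hI : IsIdealF3 n I)
    {F : Finset ℕ} (hF : isFacetOfS (coneZero I) F) {x : ℕ} (hx : x ∈ F) : x ≤ n := by
  obtain ⟨-, _, ⟨⟨f, hf, rfl⟩, hFf⟩, -⟩ := hF
  rcases Finset.mem_insert.1 (hFf hx) with rfl | hxf
  · exact Nat.zero_le n
  · exact hI.le_of_mem hf hxf

lemma IsIdealF3.relabeledFacets_congr {n : ℕ} {I : Set (Finset ℕ)} (hI : IsIdealF3 n I)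
    {σ τ : ℕ → ℕ} (h : ∀ x ≤ n, σ x = τ x) : relabeledFacets I σ = relabeledFacets I τ := by
  ext G
  refine exists_congr fun F => and_congr_right fun hF => ?_
  rw [Finset.image_congr fun x hx => h x (hI.le_of_mem_facet hF hx)]

def extendFin {n : ℕ} (τ : Fin (n + 1) → Fin (n + 1)) (x : ℕ) : ℕ :=
  if h : x < n + 1 then τ ⟨x, h⟩ else x

lemma labeledSqueezedSpheres_subset_image (n : ℕ) :
    labeledSqueezedSpheres n ⊆
      (fun q : Set (Finset ℕ) × (Fin (n + 1) ↪ Fin (n + 1)) =>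
        relabeledFacets q.1 (extendFin q.2)) '' (squeezedIdeals n ×ˢ Set.univ) := by
  rintro C ⟨I, σ, hI, hmax, hσ, rfl⟩
  let τ : Fin (n + 1) ↪ Fin (n + 1) :=
    ⟨fun x => ⟨σ x, Nat.lt_succ_of_le (hσ x (Nat.le_of_lt_succ x.isLt))⟩,
      fun a b hab => Fin.ext (σ.injective (congrArg Fin.val hab))⟩
  refine ⟨(I, τ), ⟨⟨hI, hmax⟩, Set.mem_univ _⟩, hI.relabeledFacets_congr fun x hx => ?_⟩
  simp only [extendFin, dif_pos (Nat.lt_succ_of_le hx)]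
  rfl

/-- There are at most `2^(n-4) · (n+1)!` squeezed 3-spheres with `n+1`
labeled vertices. -/
theorem count_labeled_squeezed_spheres (n : ℕ) (hn : 4 ≤ n) :
    (labeledSqueezedSpheres n).Finite ∧
    (labeledSqueezedSpheres n).ncard ≤ 2 ^ (n - 4) * Nat.factorial (n + 1) := by
  have hfin : (squeezedIdeals n ×ˢ (Set.univ : Set (Fin (n + 1) ↪ Fin (n + 1)))).Finite :=
    (finite_squeezedIdeals (by omega)).prod Set.finite_univ
  have hsub := labeledSqueezedSpheres_subset_image n
  refine ⟨(hfin.image _).subset hsub, ?_⟩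
  calc (labeledSqueezedSpheres n).ncard
      ≤ (squeezedIdeals n ×ˢ (Set.univ : Set (Fin (n + 1) ↪ Fin (n + 1)))).ncard :=
        (Set.ncard_le_ncard hsub (hfin.image _)).trans (Set.ncard_image_le hfin)
    _ = (squeezedIdeals n).ncard * Nat.factorial (n + 1) := by
        rw [Set.ncard_prod, Set.ncard_univ, Nat.card_eq_fintype_card,
          Fintype.card_embedding_eq, Fintype.card_fin, Nat.descFactorial_self]
    _ ≤ 2 ^ (n - 4) * Nat.factorial (n + 1) :=
        Nat.mul_le_mul_right _ (ncard_squeezedIdeals_le (by omega))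
end

section
/- Let n ≥ 4, let G' ⊆ F₃(n) be an antichain with respect to ⪯, and let e' = (i,j) and f' = (k,ℓ) be elements of G' with gap(e') < gap(f') such that no element of G' has gap strictly between gap(e') and gap(f'). Then m' = (k+1, j+1) is an element of F₃(n) not belonging to ⟨G'⟩ := {x ∈ F₃(n) : x ⪯ g for some g ∈ G'}, m' is a ⪯-minimal element of F₃(n)∖⟨G'⟩, gap(e') < gap(m') < gap(f'), and m' is the unique ⪯-minimal element of F₃(n)∖⟨G'⟩ whose gap lies strictly between gap(e') and gap(f'). -/
/-- The order ideal `⟨G⟩ = {x ∈ F₃(n) : x ⪯ g for some g ∈ G}` generated by `G`. -/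
def genIdeal (n : ℕ) (G : Set (Finset ℕ)) : Set (Finset ℕ) :=
  {x | memF3 n x ∧ ∃ g ∈ G, squeezedLE x g}

/-- `m` is a `⪯`-minimal element of the set `S`. -/
def IsMinIn (S : Set (Finset ℕ)) (m : Finset ℕ) : Prop :=
  m ∈ S ∧ ∀ x ∈ S, squeezedLE x m → x = m

/-!
On pairs, `⪯` is the product order: `(a,b) ⪯ (c,d) ↔ a ≤ c ∧ b ≤ d`. Since `G` is an antichain
and `gap e' < gap f'`, we get `k < i` and `j < l`. A pair `(a,b)` outside `⟨G⟩` with `a ≤ k`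
has `b > l`, else it lies below `f'`; one with `a ≤ i` has `b > j`, else it lies below `e'`.
So every pair outside `⟨G⟩` that lies below `(k+1, j+1)`, or whose gap is strictly between
`gap e'` and `gap f'`, lies above `(k+1, j+1)`. Finally `(k+1, j+1)` escapes `⟨G⟩`: a generator
above it has gap at most `gap e'`, and then lies above `e'`, or at least `gap f'`, and then lies
above `f'`.
-/

variable {n a b c d : ℕ} {G : Set (Finset ℕ)}

lemma pairSet_sort (hab : a + 2 ≤ b) :
    (pairSet a b).sort (· ≤ ·) = [a, a + 1, b, b + 1] := by
  have hnodup : [a, a + 1, b, b + 1].Nodup := by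
    simp only [List.nodup_cons, List.mem_cons, List.not_mem_nil, List.nodup_nil, or_false,
      not_false_eq_true, and_true]
    omega
  rw [show pairSet a b = [a, a + 1, b, b + 1].toFinset by ext; simp [pairSet],
    List.toFinset_sort _ hnodup]
  simp only [List.pairwise_cons, List.mem_cons, List.not_mem_nil, List.Pairwise.nil, or_false,
    forall_eq_or_imp, forall_eq, false_implies, implies_true, and_true]
  omega

lemma squeezedLE_pairSet_iff (hab : a + 2 ≤ b) (hcd : c + 2 ≤ d) :
    squeezedLE (pairSet a b) (pairSet c d) ↔ a ≤ c ∧ b ≤ d := by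
  rw [squeezedLE, pairSet_sort hab, pairSet_sort hcd]
  simp only [List.forall₂_cons, List.Forall₂.nil, and_true]
  omega

lemma gapOf_pairSet (hab : a + 2 ≤ b) : gapOf (pairSet a b) = b - a - 2 := by
  have hsup : (pairSet a b).sup id = b + 1 := by
    simp only [pairSet, Finset.sup_insert, Finset.sup_singleton, id_eq]
    omega
  rw [gapOf, hsup, pairSet_sort hab, List.headI_cons]
  omega

lemma pairSet_inj_s6 (hab : a + 2 ≤ b) (hcd : c + 2 ≤ d) :
    pairSet a b = pairSet c d ↔ a = c ∧ b = d := by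
  refine ⟨fun h => ?_, by rintro ⟨rfl, rfl⟩; rfl⟩
  have hsort := congrArg (·.sort (· ≤ ·)) h
  simp only [pairSet_sort hab, pairSet_sort hcd, List.cons.injEq] at hsort
  exact ⟨hsort.1, hsort.2.2.1⟩

lemma eq_and_eq_of_isAntichain (hanti : IsAntichain squeezedLE G)
    (hab : a + 2 ≤ b) (hcd : c + 2 ≤ d) (hg : pairSet a b ∈ G) (hg' : pairSet c d ∈ G)
    (hac : a ≤ c) (hbd : b ≤ d) : a = c ∧ b = d :=
  (pairSet_inj_s6 hab hcd).1 <| hanti.eq hg hg' <| (squeezedLE_pairSet_iff hab hcd).2 ⟨hac, hbd⟩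

lemma lt_and_lt_of_isAntichain (hanti : IsAntichain squeezedLE G)
    (hab : a + 2 ≤ b) (hcd : c + 2 ≤ d) (hg : pairSet a b ∈ G) (hg' : pairSet c d ∈ G)
    (hgap : b - a - 2 < d - c - 2) : c < a ∧ b < d := by
  have hca : c < a := by
    by_contra! hac
    have := eq_and_eq_of_isAntichain hanti hab hcd hg hg' hac (by omega)
    omega
  refine ⟨hca, ?_⟩
  by_contra! hdb
  have := eq_and_eq_of_isAntichain hanti hcd hab hg' hg hca.le hdb
  omega

lemma lt_of_notMem_genIdeal (hab : a + 2 ≤ b) (hx : memF3 n (pairSet a b))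
    (hxG : pairSet a b ∉ genIdeal n G) (hcd : c + 2 ≤ d) (hg : pairSet c d ∈ G) (hac : a ≤ c) :
    d < b := by
  by_contra! hbd
  exact hxG ⟨hx, _, hg, (squeezedLE_pairSet_iff hab hcd).2 ⟨hac, hbd⟩⟩

lemma pairSet_succ_notMem_genIdeal {i j k l : ℕ} (hG : ∀ f ∈ G, memF3 n f)
    (hanti : IsAntichain squeezedLE G) (hij : i + 2 ≤ j) (he : pairSet i j ∈ G)
    (hkl : k + 2 ≤ l) (hf : pairSet k l ∈ G) (hki : k < i)
    (hbetw : ∀ x ∈ G, ¬ (gapOf (pairSet i j) < gapOf x ∧ gapOf x < gapOf (pairSet k l))) :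
    pairSet (k + 1) (j + 1) ∉ genIdeal n G := by
  rintro ⟨-, g, hg, hle⟩
  obtain ⟨a, b, -, hab, -, rfl⟩ := hG g hg
  rw [squeezedLE_pairSet_iff (by omega) hab] at hle
  have hgap := hbetw _ hg
  rw [gapOf_pairSet hij, gapOf_pairSet hkl, gapOf_pairSet hab] at hgap
  by_cases hsmall : b - a ≤ j - i
  · have := eq_and_eq_of_isAntichain hanti hij hab he hg (by omega) (by omega)
    omega
  · have := eq_and_eq_of_isAntichain hanti hkl hab hf hg (by omega) (by omega)
    omega

theorem minimal_nonmember_between_general (n i j k l : ℕ)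
    (G : Set (Finset ℕ)) (hG : ∀ f ∈ G, memF3 n f)
    (hanti : ∀ f ∈ G, ∀ g ∈ G, f ≠ g → ¬ squeezedLE f g)
    (hij : i + 2 ≤ j) (he : pairSet i j ∈ G)
    (hkl : k + 2 ≤ l) (hln : l + 1 ≤ n) (hf : pairSet k l ∈ G)
    (hgap : gapOf (pairSet i j) < gapOf (pairSet k l))
    (hbetw : ∀ x ∈ G, ¬ (gapOf (pairSet i j) < gapOf x ∧
      gapOf x < gapOf (pairSet k l))) :
    memF3 n (pairSet (k + 1) (j + 1)) ∧
    pairSet (k + 1) (j + 1) ∉ genIdeal n G ∧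
    IsMinIn {x | memF3 n x ∧ x ∉ genIdeal n G} (pairSet (k + 1) (j + 1)) ∧
    gapOf (pairSet i j) < gapOf (pairSet (k + 1) (j + 1)) ∧
    gapOf (pairSet (k + 1) (j + 1)) < gapOf (pairSet k l) ∧
    ∀ m : Finset ℕ, IsMinIn {x | memF3 n x ∧ x ∉ genIdeal n G} m →
      gapOf (pairSet i j) < gapOf m → gapOf m < gapOf (pairSet k l) →
      m = pairSet (k + 1) (j + 1) := by
  rw [gapOf_pairSet hij, gapOf_pairSet hkl] at hgap
  obtain ⟨hki, hjl⟩ := lt_and_lt_of_isAntichain hanti hij hkl he hf hgap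
  have hm : k + 1 + 2 ≤ j + 1 := by omega
  have hmF : memF3 n (pairSet (k + 1) (j + 1)) := ⟨k + 1, j + 1, by omega, hm, by omega, rfl⟩
  have hmG := pairSet_succ_notMem_genIdeal hG hanti hij he hkl hf hki hbetw
  have hbounds : ∀ a b, a + 2 ≤ b → memF3 n (pairSet a b) → pairSet a b ∉ genIdeal n G →
      (a ≤ k → l < b) ∧ (a ≤ i → j < b) := fun a b hab hx hxG =>
    ⟨lt_of_notMem_genIdeal hab hx hxG hkl hf, lt_of_notMem_genIdeal hab hx hxG hij he⟩
  have hmin : IsMinIn {x | memF3 n x ∧ x ∉ genIdeal n G} (pairSet (k + 1) (j + 1)) := by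
    refine ⟨⟨hmF, hmG⟩, ?_⟩
    rintro x ⟨hx, hxG⟩ hle
    obtain ⟨a, b, -, hab, -, rfl⟩ := id hx
    rw [squeezedLE_pairSet_iff hab hm] at hle
    have := hbounds a b hab hx hxG
    rw [pairSet_inj_s6 hab hm]
    omega
  refine ⟨hmF, hmG, hmin, ?_, ?_, ?_⟩
  · rw [gapOf_pairSet hij, gapOf_pairSet hm]; omega
  · rw [gapOf_pairSet hm, gapOf_pairSet hkl]; omega
  · rintro x ⟨⟨hx, hxG⟩, hxmin⟩ hgap_lo hgap_hi
    obtain ⟨a, b, -, hab, -, rfl⟩ := id hx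
    rw [gapOf_pairSet hij, gapOf_pairSet hab] at hgap_lo
    rw [gapOf_pairSet hab, gapOf_pairSet hkl] at hgap_hi
    have := hbounds a b hab hx hxG
    exact (hxmin _ ⟨hmF, hmG⟩ ((squeezedLE_pairSet_iff hm hab).2 ⟨by omega, by omega⟩)).symm

/-- **Observation 1.** Let `G ⊆ F₃(n)` be a `⪯`-antichain, and let
`e' = (i,j)` and `f' = (k,ℓ)` be elements of `G` with `gap e' < gap f'` and no
element of `G` having gap strictly in between. Then `m' = (k+1, j+1)` is the
unique `⪯`-minimal element of `F₃(n) ∖ ⟨G⟩` with `gap e' < gap m' < gap f'`. -/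
theorem minimal_nonmember_between (n i j k l : ℕ) (hn : 4 ≤ n)
    (G : Set (Finset ℕ)) (hG : ∀ f ∈ G, memF3 n f)
    (hanti : ∀ f ∈ G, ∀ g ∈ G, f ≠ g → ¬ squeezedLE f g)
    (hi : 1 ≤ i) (hij : i + 2 ≤ j) (hjn : j + 1 ≤ n) (he : pairSet i j ∈ G)
    (hk : 1 ≤ k) (hkl : k + 2 ≤ l) (hln : l + 1 ≤ n) (hf : pairSet k l ∈ G)
    (hgap : gapOf (pairSet i j) < gapOf (pairSet k l))
    (hbetw : ∀ x ∈ G, ¬ (gapOf (pairSet i j) < gapOf x ∧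
      gapOf x < gapOf (pairSet k l))) :
    memF3 n (pairSet (k + 1) (j + 1)) ∧
    pairSet (k + 1) (j + 1) ∉ genIdeal n G ∧
    IsMinIn {x | memF3 n x ∧ x ∉ genIdeal n G} (pairSet (k + 1) (j + 1)) ∧
    gapOf (pairSet i j) < gapOf (pairSet (k + 1) (j + 1)) ∧
    gapOf (pairSet (k + 1) (j + 1)) < gapOf (pairSet k l) ∧
    ∀ m : Finset ℕ, IsMinIn {x | memF3 n x ∧ x ∉ genIdeal n G} m →
      gapOf (pairSet i j) < gapOf m → gapOf m < gapOf (pairSet k l) →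
      m = pairSet (k + 1) (j + 1) :=
  minimal_nonmember_between_general n i j k l G hG hanti hij he hkl hln hf hgap hbetw
end

section
/- Let n ≥ 4 and let 0 = t₀ < t₁ < ⋯ < t_n be real numbers. Then there exists a real number ε with 0 < ε < t₁ such that for all f, g ∈ F₄(n) with f ⪯ g and f ≠ g, one has ∏_{i∈f}(ε − t_i) < ∏_{i∈g}(ε − t_i). -/
/-- Membership in `F₄(n) = {{0} ∪ f : f ∈ F₃(n)}`. -/
def memF4 (n : ℕ) (f : Finset ℕ) : Prop :=
  ∃ g : Finset ℕ, memF3 n g ∧ f = insert 0 g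

lemma sort_cone (i j : ℕ) (hi : 1 ≤ i) (hij : i + 2 ≤ j) :
    (insert 0 (pairSet i j)).sort (· ≤ ·) = [0, i, i+1, j, j+1] := by
  have : pairSet i j = insert i (insert (i+1) (insert j {j+1})) := rfl
  rw [this]
  rw [Finset.sort_insert, Finset.sort_insert, Finset.sort_insert, Finset.sort_insert,
    Finset.sort_singleton] <;> simp <;> omega

lemma prod_cone (i j : ℕ) (hi : 1 ≤ i) (hij : i + 2 ≤ j) (F : ℕ → ℝ) :
    ∏ k ∈ insert 0 (pairSet i j), F k = F 0 * (F i * (F (i+1) * (F j * F (j+1)))) := by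
  have : pairSet i j = insert i (insert (i+1) (insert j {j+1})) := rfl
  rw [this]
  rw [Finset.prod_insert, Finset.prod_insert, Finset.prod_insert, Finset.prod_insert,
    Finset.prod_singleton] <;> simp <;> omega

lemma prod4_lt {A B C D A' B' C' D' : ℝ} (hA : 0 < A) (hB : 0 < B) (hC : 0 < C) (hD : 0 < D)
    (h1 : A ≤ A') (h2 : B ≤ B') (h3 : C ≤ C') (h4 : D ≤ D')
    (hs : A < A' ∨ C < C') : A*(B*(C*D)) < A'*(B'*(C'*D')) := by
  rcases hs with hs | hs
  · calc A*(B*(C*D)) < A'*(B*(C*D)) := by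
          exact mul_lt_mul_of_pos_right hs (by positivity)
      _ ≤ A'*(B'*(C'*D')) := by
          have hA' : 0 < A' := lt_of_lt_of_le hA h1
          gcongr <;> linarith
  · calc A*(B*(C*D)) < A*(B*(C'*D)) := by
          exact mul_lt_mul_of_pos_left (mul_lt_mul_of_pos_left
            (mul_lt_mul_of_pos_right hs hD) hB) hA
      _ ≤ A'*(B'*(C'*D')) := by
          have hC' : 0 < C' := lt_of_lt_of_le hC h3
          gcongr <;> linarith

/-- **Step 3 of the realization.** Given `0 = t₀ < t₁ < ⋯ < t_n`, there is
`ε` with `0 < ε < t₁` such that strict `⪯`-comparisons in `F₄(n)` translate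
into strict inequalities between the products `∏_{i ∈ f} (ε - t_i)`. -/
theorem realization_step_three (n : ℕ) (hn : 4 ≤ n) (t : ℕ → ℝ)
    (h0 : t 0 = 0) (hmono : ∀ i : ℕ, i < n → t i < t (i + 1)) :
    ∃ ε : ℝ, 0 < ε ∧ ε < t 1 ∧
      ∀ f g : Finset ℕ, memF4 n f → memF4 n g → squeezedLE f g → f ≠ g →
        (∏ i ∈ f, (ε - t i)) < ∏ i ∈ g, (ε - t i) := by
  have tmono : ∀ b, b ≤ n → ∀ a, a < b → t a < t b := by
    intro b
    induction b with
    | zero => omega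
    | succ m ih =>
      intro hb a ha
      rcases Nat.lt_succ_iff_lt_or_eq.mp ha with h | h
      · exact lt_trans (ih (by omega) a h) (hmono m (by omega))
      · subst h; exact hmono a (by omega)
  have t1pos : 0 < t 1 := by
    have := tmono 1 (by omega) 0 (by omega); linarith
  set ε : ℝ := t 1 / 2 with hε
  refine ⟨ε, by linarith, by linarith, ?_⟩
  have hpos : ∀ k, 1 ≤ k → k ≤ n → 0 < t k - ε := by
    intro k h1 hk
    have : t 1 ≤ t k := by
      rcases Nat.lt_or_ge 1 k with h | h
      · exact le_of_lt (tmono k hk 1 h)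
      · have : k = 1 := by omega
        simp [this]
    linarith
  have hle2 : ∀ a b, a ≤ b → b ≤ n → t a - ε ≤ t b - ε := by
    intro a b hab hbn
    rcases Nat.lt_or_ge a b with h | h
    · have := tmono b hbn a h; linarith
    · have : a = b := by omega
      simp [this]
  have hlt2 : ∀ a b, a < b → b ≤ n → t a - ε < t b - ε := by
    intro a b hab hbn
    have := tmono b hbn a hab; linarith
  intro f g hf hg hle hne
  obtain ⟨f', ⟨i, j, hi, hij, hjn, rfl⟩, rfl⟩ := hf
  obtain ⟨g', ⟨i', j', hi', hij', hjn', rfl⟩, rfl⟩ := hg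
  unfold squeezedLE at hle
  rw [sort_cone i j hi hij, sort_cone i' j' hi' hij'] at hle
  simp only [List.forall₂_cons, List.forall₂_nil_left_iff] at hle
  obtain ⟨-, h1, h2, h3, h4, -⟩ := hle
  have hstrict : i < i' ∨ j < j' := by
    by_contra h
    push_neg at h
    have : i = i' := by omega
    subst this
    have : j = j' := by omega
    subst this
    exact hne rfl
  rw [prod_cone i j hi hij, prod_cone i' j' hi' hij']
  have e0 : ε - t 0 = ε := by rw [h0]; ring
  rw [e0]
  have eL : (ε - t i) * ((ε - t (i+1)) * ((ε - t j) * (ε - t (j+1))))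
      = (t i - ε) * ((t (i+1) - ε) * ((t j - ε) * (t (j+1) - ε))) := by ring
  have eR : (ε - t i') * ((ε - t (i'+1)) * ((ε - t j') * (ε - t (j'+1))))
      = (t i' - ε) * ((t (i'+1) - ε) * ((t j' - ε) * (t (j'+1) - ε))) := by ring
  rw [eL, eR]
  apply mul_lt_mul_of_pos_left _ (by linarith : (0:ℝ) < ε)
  apply prod4_lt
  · exact hpos i hi (by omega)
  · exact hpos (i+1) (by omega) (by omega)
  · exact hpos j (by omega) (by omega)
  · exact hpos (j+1) (by omega) (by omega)
  · exact hle2 i i' h1 (by omega)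
  · exact hle2 (i+1) (i'+1) (by omega) (by omega)
  · exact hle2 j j' h3 (by omega)
  · exact hle2 (j+1) (j'+1) (by omega) (by omega)
  · rcases hstrict with h | h
    · exact Or.inl (hlt2 i i' h (by omega))
    · exact Or.inr (hlt2 j j' h (by omega))
end

section
/- Let n ≥ 1, let t₀ < t₁ < ⋯ < t_n be real numbers, and let F be a nonempty subset of {0,1,…,n} satisfying Gale's evenness condition, such that some element of {0,…,n} smaller than max F lies outside F. If the end set of F has odd cardinality, then ∏_{i∈F}(t_j − t_i) < 0 for every j ∈ {0,…,n}∖F; if the end set of F has even cardinality, then ∏_{i∈F}(t_j − t_i) > 0 for every j ∈ {0,…,n}∖F. -/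
/-- `F ⊆ {0,…,n}` satisfies Gale's evenness condition: between any two
elements of `{0,…,n}` outside `F`, the number of elements of `F` is even. -/
def GaleEvenness (n : ℕ) (F : Finset ℕ) : Prop :=
  ∀ i j : ℕ, i ≤ n → j ≤ n → i < j → i ∉ F → j ∉ F →
    Even ((F.filter fun x => i < x ∧ x < j).card)


lemma prod_sign_of_neg (s : Finset ℕ) (f : ℕ → ℝ) (h : ∀ i ∈ s, f i < 0) :
    (Even s.card → 0 < ∏ i ∈ s, f i) ∧ (Odd s.card → ∏ i ∈ s, f i < 0) := by
  induction s using Finset.induction with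
  | empty => simp
  | @insert a s ha ih =>
    have hfa : f a < 0 := h a (Finset.mem_insert_self a s)
    have ih' := ih (fun i hi => h i (Finset.mem_insert_of_mem hi))
    rw [Finset.prod_insert ha, Finset.card_insert_of_notMem ha]
    constructor
    · intro he
      have h1 : Odd s.card := by simpa [Nat.even_add_one, Nat.not_even_iff_odd] using he
      exact mul_pos_of_neg_of_neg hfa (ih'.2 h1)
    · intro ho
      have h1 : Even s.card := by simpa [Nat.odd_add_one] using ho
      exact mul_neg_of_neg_of_pos hfa (ih'.1 h1)

/-- **Sign of the product over a Gale facet.** Let `t₀ < ⋯ < t_n`, let `F` be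
a nonempty subset of `{0,…,n}` satisfying Gale's evenness condition, and let
`r` be the largest element of `{0,…,n} ∖ F` below `max F` (so that the end set
of `F` is `{r+1,…,max F}`, of cardinality `max F - r`). If the end set has odd
cardinality, then `∏_{i ∈ F} (t_j - t_i) < 0` for every `j ∈ {0,…,n} ∖ F`;
if it has even cardinality, then `∏_{i ∈ F} (t_j - t_i) > 0` for every such `j`. -/
theorem gale_facet_product_sign (n : ℕ) (hn : 1 ≤ n) (t : ℕ → ℝ)
    (hmono : ∀ i : ℕ, i < n → t i < t (i + 1))
    (F : Finset ℕ) (hF : F ⊆ Finset.range (n + 1)) (hne : F.Nonempty)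
    (hGale : GaleEvenness n F)
    (r : ℕ) (hr : r ∉ F) (hrlt : r < F.max' hne)
    (hrmax : ∀ x : ℕ, x ∉ F → x < F.max' hne → x ≤ r) :
    (Odd (F.max' hne - r) →
      ∀ j : ℕ, j ≤ n → j ∉ F → (∏ i ∈ F, (t j - t i)) < 0) ∧
    (Even (F.max' hne - r) →
      ∀ j : ℕ, j ≤ n → j ∉ F → 0 < ∏ i ∈ F, (t j - t i)) := by
  set M := F.max' hne with hMdef
  have hMF : M ∈ F := F.max'_mem hne
  have hMn : M ≤ n := by
    have := hF hMF; rw [Finset.mem_range, Nat.lt_succ_iff] at this; exact this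
  have hrn : r ≤ n := le_trans hrlt.le hMn
  have hle : ∀ i ∈ F, i ≤ M := fun i hi => F.le_max' i hi
  have hFn : ∀ i ∈ F, i ≤ n := fun i hi => le_trans (hle i hi) hMn
  -- strict monotonicity
  have ht : ∀ j, j ≤ n → ∀ i, i < j → t i < t j := by
    intro j hj
    induction j with
    | zero => omega
    | succ k ih =>
      intro i hi
      have hk : t k < t (k + 1) := hmono k (by omega)
      rcases Nat.lt_or_ge i k with h | h
      · exact (ih (by omega) i h).trans hk
      · have : i = k := by omega
        subst this; exact hk
  -- the end-set filter
  have hIcc : F.filter (fun i => r < i) = Finset.Icc (r + 1) M := by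
    ext x
    simp only [Finset.mem_filter, Finset.mem_Icc]
    constructor
    · rintro ⟨hxF, hrx⟩; exact ⟨hrx, hle x hxF⟩
    · rintro ⟨h1, h2⟩
      refine ⟨?_, by omega⟩
      by_contra hx
      rcases eq_or_lt_of_le h2 with h | h
      · exact hx (h ▸ hMF)
      · have := hrmax x hx h; omega
  have hcard : (F.filter (fun i => r < i)).card = M - r := by
    rw [hIcc, Nat.card_Icc]; omega
  -- parity claim
  have heven : ∀ j, j ≤ n → j ∉ F →
      Even ((F.filter fun i => j < i).card + (M - r)) := by
    intro j hj hjF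
    rcases lt_trichotomy j M with hjM | hjM | hjM
    · have hjr : j ≤ r := hrmax j hjF hjM
      rcases eq_or_lt_of_le hjr with hEq | hjr'
      · have hc : (F.filter fun i => j < i).card = M - r := by rw [hEq]; exact hcard
        rw [hc]; exact ⟨M - r, rfl⟩
      · have hGj := hGale j r hj hrn hjr' hjF hr
        have hsplit := Finset.card_filter_add_card_filter_not
          (s := F.filter fun i => j < i) (p := fun i => i < r)
        have e1 : (F.filter fun i => j < i).filter (fun i => i < r)
            = F.filter (fun x => j < x ∧ x < r) := by rw [Finset.filter_filter]
        have e2 : (F.filter fun i => j < i).filter (fun i => ¬ i < r)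
            = F.filter (fun i => r < i) := by
          rw [Finset.filter_filter]
          ext x
          simp only [Finset.mem_filter, not_lt]
          constructor
          · rintro ⟨hxF, _, hxr⟩
            refine ⟨hxF, lt_of_le_of_ne hxr ?_⟩
            rintro rfl; exact hr hxF
          · rintro ⟨hxF, hrx⟩; exact ⟨hxF, by omega, by omega⟩
        rw [e1, e2, hcard] at hsplit
        obtain ⟨k, hk⟩ := hGj
        exact ⟨k + (M - r), by omega⟩
    · exact absurd (hjM ▸ hMF) hjF
    · have h0 : (F.filter fun i => j < i) = ∅ :=
        Finset.filter_false_of_mem (fun i hi => by have := hle i hi; omega)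
      have hG := hGale r j hrn hj (lt_trans hrlt hjM) hr hjF
      have e3 : F.filter (fun x => r < x ∧ x < j) = F.filter (fun i => r < i) := by
        ext x
        simp only [Finset.mem_filter]
        constructor
        · rintro ⟨h1, h2, _⟩; exact ⟨h1, h2⟩
        · rintro ⟨h1, h2⟩; exact ⟨h1, h2, by have := hle x h1; omega⟩
      rw [e3, hcard] at hG
      rw [h0]
      simpa using hG
  -- sign claim
  have hsign : ∀ j, j ≤ n → j ∉ F →
      (Even ((F.filter fun i => j < i).card) → 0 < ∏ i ∈ F, (t j - t i)) ∧
      (Odd ((F.filter fun i => j < i).card) → (∏ i ∈ F, (t j - t i)) < 0) := by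
    intro j hj hjF
    have hA : 0 < ∏ i ∈ F.filter (fun i => ¬ j < i), (t j - t i) := by
      refine Finset.prod_pos fun i hi => ?_
      rw [Finset.mem_filter, not_lt] at hi
      obtain ⟨hiF, hij⟩ := hi
      have hij' : i < j := lt_of_le_of_ne hij (fun h => hjF (h ▸ hiF))
      exact sub_pos.mpr (ht j hj i hij')
    have hB := prod_sign_of_neg (F.filter fun i => j < i) (fun i => t j - t i)
      (fun i hi => by
        rw [Finset.mem_filter] at hi
        exact sub_neg.mpr (ht i (hFn i hi.1) j hi.2))
    have hprod : (∏ i ∈ F, (t j - t i))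
        = (∏ i ∈ F.filter (fun i => j < i), (t j - t i))
          * (∏ i ∈ F.filter (fun i => ¬ j < i), (t j - t i)) :=
      (Finset.prod_filter_mul_prod_filter_not F _ _).symm
    exact ⟨fun hpar => hprod ▸ mul_pos (hB.1 hpar) hA,
           fun hpar => hprod ▸ mul_neg_of_neg_of_pos (hB.2 hpar) hA⟩
  constructor
  · intro hodd j hj hjF
    refine (hsign j hj hjF).2 ?_
    have hk := heven j hj hjF
    rw [Nat.even_add] at hk
    rw [Nat.odd_iff] at hodd ⊢
    rw [Nat.even_iff, Nat.even_iff] at hk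
    omega
  · intro hev j hj hjF
    refine (hsign j hj hjF).1 ?_
    have hk := heven j hj hjF
    rw [Nat.even_add] at hk
    rw [Nat.even_iff] at hev ⊢
    rw [Nat.even_iff, Nat.even_iff] at hk
    omega
end

section
/- Let n ≥ 4 and let F be a 5-element subset of {0,1,…,n} satisfying Gale's evenness condition, such that some element of {0,…,n} smaller than max F lies outside F and the end set of F has even cardinality. Then 0 ∈ F and F = {0, i, i+1, j, j+1} for integers i, j with 1 ≤ i, i+2 ≤ j and j+1 ≤ n; that is, F ∈ F₄(n). -/
/-- A singleton interior run `{x}` (with both neighbours outside `F`)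
contradicts Gale's evenness condition. -/
lemma singleton_run {n : ℕ} {F : Finset ℕ} (hGale : GaleEvenness n F) {x : ℕ}
    (hx1 : 1 ≤ x) (hxn : x + 1 ≤ n) (hxF : x ∈ F)
    (h1 : x - 1 ∉ F) (h2 : x + 1 ∉ F) : False := by
  have h := hGale (x - 1) (x + 1) (by omega) hxn (by omega) h1 h2
  have hfe : F.filter (fun y => x - 1 < y ∧ y < x + 1) = {x} := by
    ext y
    simp only [Finset.mem_filter, Finset.mem_singleton]
    constructor
    · rintro ⟨hy, h⟩; omega
    · rintro rfl; exact ⟨hxF, by omega⟩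
  rw [hfe, Finset.card_singleton] at h
  exact (Nat.not_even_iff_odd.mpr odd_one) h

/-- A triple interior run `{x, x+1, x+2}` (with both neighbours outside `F`)
contradicts Gale's evenness condition. -/
lemma triple_run {n : ℕ} {F : Finset ℕ} (hGale : GaleEvenness n F) {x : ℕ}
    (hx1 : 1 ≤ x) (hxn : x + 3 ≤ n) (hxF : x ∈ F) (hxF1 : x + 1 ∈ F)
    (hxF2 : x + 2 ∈ F) (h1 : x - 1 ∉ F) (h2 : x + 3 ∉ F) : False := by
  have h := hGale (x - 1) (x + 3) (by omega) hxn (by omega) h1 h2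
  have hfe : F.filter (fun y => x - 1 < y ∧ y < x + 3) = {x, x + 1, x + 2} := by
    ext y
    simp only [Finset.mem_filter, Finset.mem_insert, Finset.mem_singleton]
    constructor
    · rintro ⟨hy, h⟩; omega
    · rintro (rfl | rfl | rfl)
      · exact ⟨hxF, by omega⟩
      · exact ⟨hxF1, by omega⟩
      · exact ⟨hxF2, by omega⟩
  rw [hfe] at h
  have hc : ({x, x + 1, x + 2} : Finset ℕ).card = 3 := by
    rw [Finset.card_insert_of_notMem
        (by simp only [Finset.mem_insert, Finset.mem_singleton]; omega),
      Finset.card_insert_of_notMem (by simp), Finset.card_singleton]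
  rw [hc] at h
  exact (by decide : ¬ Even 3) h

/-- **Lower facets contain 0.** A 5-element subset `F` of `{0,…,n}` satisfying
Gale's evenness condition whose end set `{r+1,…,max F}` has even cardinality
must contain `0`; in fact `F = {0} ∪ {i, i+1, j, j+1}` with `1 ≤ i`,
`i + 2 ≤ j`, `j + 1 ≤ n`, i.e. `F ∈ F₄(n)`. -/
theorem even_end_set_facet_mem_F4 (n : ℕ) (hn : 4 ≤ n)
    (F : Finset ℕ) (hF : F ⊆ Finset.range (n + 1)) (hcard : F.card = 5)
    (hne : F.Nonempty) (hGale : GaleEvenness n F)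
    (r : ℕ) (hr : r ∉ F) (hrlt : r < F.max' hne)
    (hrmax : ∀ x : ℕ, x ∉ F → x < F.max' hne → x ≤ r)
    (heven : Even (F.max' hne - r)) :
    0 ∈ F ∧ ∃ i j : ℕ, 1 ≤ i ∧ i + 2 ≤ j ∧ j + 1 ≤ n ∧
      F = insert 0 (pairSet i j) := by
  set m := F.max' hne with hm
  have hmF : m ∈ F := F.max'_mem hne
  have hmn : m ≤ n := by
    have := hF hmF; rw [Finset.mem_range] at this; omega
  have hrn : r ≤ n := by omega
  have hIcc : Finset.Icc (r + 1) m ⊆ F := by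
    intro x hx
    rw [Finset.mem_Icc] at hx
    by_contra hxF
    rcases eq_or_lt_of_le hx.2 with h | h
    · exact hxF (h ▸ hmF)
    · have := hrmax x hxF h; omega
  have hcardI : (Finset.Icc (r + 1) m).card = m - r := by
    rw [Nat.card_Icc]; omega
  have hle : m - r ≤ 5 := by
    have := Finset.card_le_card hIcc
    rw [hcardI, hcard] at this; exact this
  have hk : m - r = 2 ∨ m - r = 4 := by
    rcases heven with ⟨t, ht⟩; omega
  -- the complement of the end set inside F
  set S := F \ Finset.Icc (r + 1) m with hSdef
  have hmemS : ∀ x, x ∈ F ↔ x ∈ S ∨ (r + 1 ≤ x ∧ x ≤ m) := by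
    intro x
    constructor
    · intro hx
      by_cases hc : x ∈ Finset.Icc (r + 1) m
      · right; exact Finset.mem_Icc.mp hc
      · left; exact Finset.mem_sdiff.mpr ⟨hx, hc⟩
    · rintro (hx | hx)
      · exact (Finset.mem_sdiff.mp hx).1
      · exact hIcc (Finset.mem_Icc.mpr hx)
  have hSlt : ∀ x ∈ S, x < r := by
    intro x hx
    rw [Finset.mem_sdiff, Finset.mem_Icc] at hx
    have hxm : x ≤ m := F.le_max' x hx.1
    have hxr : x ≠ r := fun h => hr (h ▸ hx.1)
    omega
  have hcardS : S.card = 5 - (m - r) := by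
    rw [hSdef, Finset.card_sdiff_of_subset hIcc, hcardI, hcard]
  rcases hk with hk | hk
  · -- end set has two elements: m = r + 2
    have hcardS3 : S.card = 3 := by omega
    have hSne : S.Nonempty := Finset.card_pos.mp (by omega)
    set c := S.max' hSne with hc
    have hcS : c ∈ S := S.max'_mem hSne
    have hcF : c ∈ F := (Finset.mem_sdiff.mp hcS).1
    have hcr : c < r := hSlt c hcS
    have hc2 : 2 ≤ c := by
      have hsub : S ⊆ Finset.range (c + 1) := by
        intro x hx
        rw [Finset.mem_range]
        have := S.le_max' x hx; omega
      have := Finset.card_le_card hsub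
      rw [hcardS3, Finset.card_range] at this; omega
    have hc1nF : c + 1 ∉ F := by
      rw [hmemS]
      rintro (h | h)
      · have := S.le_max' (c + 1) h; omega
      · omega
    have hcm1F : c - 1 ∈ F := by
      by_contra h
      exact singleton_run hGale (by omega) (by omega) hcF h hc1nF
    have hcm1S : c - 1 ∈ S := by
      rcases (hmemS (c - 1)).mp hcm1F with h | h
      · exact h
      · omega
    -- extract the third element of S
    have hpair : ({c - 1, c} : Finset ℕ) ⊆ S := by
      intro x hx
      rcases Finset.mem_insert.mp hx with rfl | hx
      · exact hcm1S
      · rw [Finset.mem_singleton] at hx; exact hx ▸ hcS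
    have hcardpair : ({c - 1, c} : Finset ℕ).card = 2 := by
      rw [Finset.card_insert_of_notMem (by simp; omega), Finset.card_singleton]
    have hcard1 : (S \ {c - 1, c}).card = 1 := by
      rw [Finset.card_sdiff_of_subset hpair, hcardS3, hcardpair]
    obtain ⟨a, ha⟩ := Finset.card_eq_one.mp hcard1
    have haS : a ∈ S := by
      have : a ∈ S \ {c - 1, c} := ha ▸ Finset.mem_singleton_self a
      exact (Finset.mem_sdiff.mp this).1
    have hane : a ≠ c - 1 ∧ a ≠ c := by
      have : a ∈ S \ {c - 1, c} := ha ▸ Finset.mem_singleton_self a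
      have := (Finset.mem_sdiff.mp this).2
      simp only [Finset.mem_insert, Finset.mem_singleton] at this
      tauto
    have halt : a + 2 ≤ c := by
      have := S.le_max' a haS; omega
    have hSeq : S = {a, c - 1, c} := by
      refine (Finset.eq_of_subset_of_card_le ?_ ?_).symm
      · intro x hx
        rcases Finset.mem_insert.mp hx with rfl | hx
        · exact haS
        · rcases Finset.mem_insert.mp hx with rfl | hx
          · exact hcm1S
          · rw [Finset.mem_singleton] at hx; exact hx ▸ hcS
      · rw [hcardS3]
        rw [Finset.card_insert_of_notMem (by simp; omega),
          Finset.card_insert_of_notMem (by simp; omega), Finset.card_singleton]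
    have hmem : ∀ x, x ∈ F ↔ (x = a ∨ x = c - 1 ∨ x = c) ∨ (r + 1 ≤ x ∧ x ≤ m) := by
      intro x
      rw [hmemS, hSeq]
      simp only [Finset.mem_insert, Finset.mem_singleton]
    have haF : a ∈ F := (Finset.mem_sdiff.mp haS).1
    have ha0 : a = 0 := by
      by_contra h
      have h1 : 1 ≤ a := by omega
      have ham1 : a - 1 ∉ F := by rw [hmem]; omega
      by_cases hb : a + 1 = c - 1
      · -- triple run a, a+1, a+2
        have haF1 : a + 1 ∈ F := by rw [hmem]; omega
        have haF2 : a + 2 ∈ F := by rw [hmem]; omega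
        have ha3 : a + 3 ∉ F := by rw [hmem]; omega
        exact triple_run hGale h1 (by omega) haF haF1 haF2 ham1 ha3
      · have ha1 : a + 1 ∉ F := by rw [hmem]; omega
        exact singleton_run hGale h1 (by omega) haF ham1 ha1
    refine ⟨by rw [hmem]; omega, c - 1, r + 1, by omega, by omega, by omega, ?_⟩
    ext x
    rw [hmem, pairSet]
    simp only [Finset.mem_insert, Finset.mem_singleton]
    omega
  · -- end set has four elements: m = r + 4
    have hcardS1 : S.card = 1 := by omega
    obtain ⟨a, ha⟩ := Finset.card_eq_one.mp hcardS1
    have haS : a ∈ S := ha ▸ Finset.mem_singleton_self a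
    have haF : a ∈ F := (Finset.mem_sdiff.mp haS).1
    have har : a < r := hSlt a haS
    have hmem : ∀ x, x ∈ F ↔ x = a ∨ (r + 1 ≤ x ∧ x ≤ m) := by
      intro x
      rw [hmemS, ha, Finset.mem_singleton]
    have ha0 : a = 0 := by
      by_contra h
      have h1 : 1 ≤ a := by omega
      have ham1 : a - 1 ∉ F := by rw [hmem]; omega
      have ha1 : a + 1 ∉ F := by rw [hmem]; omega
      exact singleton_run hGale h1 (by omega) haF ham1 ha1
    refine ⟨by rw [hmem]; omega, r + 1, r + 3, by omega, by omega, by omega, ?_⟩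
    ext x
    rw [hmem, pairSet]
    simp only [Finset.mem_insert, Finset.mem_singleton]
    omega
end

section
/- Let n ≥ 5 and let F be a 5-element subset of {0,1,…,n} with 0 ∈ F, satisfying Gale's evenness condition, such that some element of {0,…,n} smaller than max F lies outside F and the end set of F has odd cardinality. Then F = {0, 1, i, i+1, n} for some integer i with 2 ≤ i ≤ n−2. -/
/-- Auxiliary: a set `{0,1,u,v,n}` with `2 ≤ u < v ≤ n-2` satisfying Gale's
condition must have `v = u + 1`. -/
lemma aux_consec (n : ℕ) (hn : 5 ≤ n) (F : Finset ℕ) (hGale : GaleEvenness n F)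
    (u v : ℕ) (hu : 2 ≤ u) (huv : u < v) (hv : v ≤ n - 2)
    (hFeq : F = {0, 1, u, v, n}) :
    ∃ i : ℕ, 2 ≤ i ∧ i ≤ n - 2 ∧ F = {0, 1, i, i + 1, n} := by
  have hveq : v = u + 1 := by
    by_contra hne'
    have h1 : u + 1 < v := by omega
    have hu1 : u + 1 ∉ F := by
      simp only [hFeq, Finset.mem_insert, Finset.mem_singleton]
      omega
    have hn1 : n - 1 ∉ F := by
      simp only [hFeq, Finset.mem_insert, Finset.mem_singleton]
      omega
    have hev := hGale (u + 1) (n - 1) (by omega) (by omega) (by omega) hu1 hn1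
    have hfilt : (F.filter fun x => u + 1 < x ∧ x < n - 1) = {v} := by
      ext x
      simp only [Finset.mem_filter, hFeq, Finset.mem_insert, Finset.mem_singleton]
      omega
    rw [hfilt] at hev
    simp at hev
  refine ⟨u, hu, by omega, ?_⟩
  rw [hFeq, hveq]

/-- Auxiliary: two further elements `p ≠ q`, order unknown. -/
lemma aux_two (n : ℕ) (hn : 5 ≤ n) (F : Finset ℕ) (hGale : GaleEvenness n F)
    (p q : ℕ) (hpq : p ≠ q) (hp1 : p ≠ 1) (hq1 : q ≠ 1)
    (hp : 1 ≤ p ∧ p ≤ n - 2) (hq : 1 ≤ q ∧ q ≤ n - 2)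
    (hFeq : F = {0, 1, p, q, n}) :
    ∃ i : ℕ, 2 ≤ i ∧ i ≤ n - 2 ∧ F = {0, 1, i, i + 1, n} := by
  rcases lt_or_gt_of_ne hpq with h | h
  · exact aux_consec n hn F hGale p q (by omega) h (by omega) hFeq
  · refine aux_consec n hn F hGale q p (by omega) h (by omega) ?_
    rw [hFeq]
    ext x
    simp only [Finset.mem_insert, Finset.mem_singleton]
    omega

/-- **Upper facets through 0.** For `n ≥ 5`, a 5-element subset `F` of
`{0,…,n}` containing `0`, satisfying Gale's evenness condition, whose end set
`{r+1,…,max F}` has odd cardinality, must be of the form `{0, 1, i, i+1, n}`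
with `2 ≤ i ≤ n - 2`. -/
theorem odd_end_set_facet_form (n : ℕ) (hn : 5 ≤ n)
    (F : Finset ℕ) (hF : F ⊆ Finset.range (n + 1)) (hcard : F.card = 5)
    (h0 : 0 ∈ F) (hne : F.Nonempty) (hGale : GaleEvenness n F)
    (r : ℕ) (hr : r ∉ F) (hrlt : r < F.max' hne)
    (hrmax : ∀ x : ℕ, x ∉ F → x < F.max' hne → x ≤ r)
    (hodd : Odd (F.max' hne - r)) :
    ∃ i : ℕ, 2 ≤ i ∧ i ≤ n - 2 ∧ F = {0, 1, i, i + 1, n} := by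
  have hMmem : F.max' hne ∈ F := F.max'_mem hne
  have hMle : F.max' hne ≤ n := by
    have := hF hMmem
    simpa [Finset.mem_range, Nat.lt_succ_iff] using this
  have hle : ∀ x ∈ F, x ≤ F.max' hne := fun x hx => F.le_max' x hx
  -- Step 1: max F = n
  have hM : F.max' hne = n := by
    by_contra hMne
    have hMlt : F.max' hne < n := lt_of_le_of_ne hMle hMne
    have hj : F.max' hne + 1 ∉ F := fun h => by
      have := hle _ h; omega
    have hev := hGale r (F.max' hne + 1) (by omega) (by omega) (by omega) hr hj
    have hfilt : (F.filter fun x => r < x ∧ x < F.max' hne + 1)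
        = Finset.Icc (r + 1) (F.max' hne) := by
      ext x
      simp only [Finset.mem_filter, Finset.mem_Icc]
      constructor
      · rintro ⟨hx, h1, h2⟩; omega
      · rintro ⟨h1, h2⟩
        refine ⟨?_, by omega, by omega⟩
        by_contra hxF
        rcases eq_or_lt_of_le h2 with h | h
        · exact hxF (h ▸ hMmem)
        · have := hrmax x hxF h; omega
    rw [hfilt, Nat.card_Icc] at hev
    have heq : F.max' hne + 1 - (r + 1) = F.max' hne - r := by omega
    rw [heq] at hev
    exact (Nat.not_even_iff_odd.mpr hodd) hev
  rw [hM] at hrlt hrmax hodd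
  have hnF : n ∈ F := hM ▸ hMmem
  -- all of r+1..n are in F
  have hIcc : Finset.Icc (r + 1) n ⊆ F := by
    intro x hx
    rw [Finset.mem_Icc] at hx
    by_contra hxF
    rcases eq_or_lt_of_le hx.2 with h | h
    · exact hxF (h ▸ hnF)
    · have := hrmax x hxF h; omega
  have hr1 : 1 ≤ r := by
    rcases Nat.eq_zero_or_pos r with h | h
    · exact absurd (h ▸ h0) hr
    · exact h
  -- s = n - r ≤ 4
  have hsub : insert 0 (Finset.Icc (r + 1) n) ⊆ F := by
    intro x hx
    rcases Finset.mem_insert.mp hx with h | h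
    · exact h ▸ h0
    · exact hIcc h
  have hcard4 : (insert 0 (Finset.Icc (r + 1) n)).card = 1 + (n - r) := by
    rw [Finset.card_insert_of_notMem (by simp only [Finset.mem_Icc]; omega), Nat.card_Icc]
    omega
  have hsle : 1 + (n - r) ≤ 5 := by
    rw [← hcard4, ← hcard]
    exact Finset.card_le_card hsub
  have hs : n - r = 1 ∨ n - r = 3 := by
    rcases hodd with ⟨k, hk⟩
    omega
  have hmemF : ∀ x ∈ F, x ≤ n := fun x hx => by
    have := hF hx
    simpa [Finset.mem_range, Nat.lt_succ_iff] using this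
  rcases hs with hs | hs
  · -- s = 1 : r = n - 1
    have hrn : r = n - 1 := by omega
    have hsub2 : ({0, n} : Finset ℕ) ⊆ F := by
      intro x hx
      rcases Finset.mem_insert.mp hx with h | h
      · exact h ▸ h0
      · exact (Finset.mem_singleton.mp h) ▸ hnF
    have hG : (F \ {0, n}).card = 3 := by
      rw [Finset.card_sdiff_of_subset hsub2, hcard]
      rw [Finset.card_insert_of_notMem (by simp; omega), Finset.card_singleton]
    obtain ⟨a, b, c, hab, hac, hbc, hGeq⟩ := Finset.card_eq_three.mp hG
    have hFeq : F = {0, n, a, b, c} := by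
      have h1 : ({0, n} : Finset ℕ) ∪ (F \ {0, n}) = F :=
        Finset.union_sdiff_of_subset hsub2
      rw [hGeq] at h1
      rw [← h1]
      ext x
      simp only [Finset.mem_union, Finset.mem_insert, Finset.mem_singleton]
      omega
    have hbound : ∀ x ∈ ({a, b, c} : Finset ℕ), 1 ≤ x ∧ x ≤ n - 2 := by
      intro x hx
      have hxG : x ∈ F \ {0, n} := hGeq ▸ hx
      rw [Finset.mem_sdiff] at hxG
      have hxF := hxG.1
      have hxn : x ≤ n := hmemF x hxF
      have hx0 : x ≠ 0 := fun h => hxG.2 (by simp [h])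
      have hxn' : x ≠ n := fun h => hxG.2 (by simp [h])
      have hxr : x ≠ r := fun h => hr (h ▸ hxF)
      omega
    have ha := hbound a (by simp)
    have hb := hbound b (by simp)
    have hc := hbound c (by simp)
    -- 1 ∈ F
    have h1F : 1 ∈ F := by
      by_contra h1F
      have hrF : n - 1 ∉ F := hrn ▸ hr
      have hev := hGale 1 (n - 1) (by omega) (by omega) (by omega) h1F hrF
      have hfilt : (F.filter fun x => 1 < x ∧ x < n - 1) = {a, b, c} := by
        ext x
        constructor
        · intro hx
          rw [Finset.mem_filter, hFeq] at hx
          simp only [Finset.mem_insert, Finset.mem_singleton] at hx ⊢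
          omega
        · intro hx
          have hxF : x ∈ F := by
            rw [hFeq]
            simp only [Finset.mem_insert, Finset.mem_singleton] at hx ⊢
            omega
          have hx1 : x ≠ 1 := fun h => h1F (h ▸ hxF)
          rw [Finset.mem_filter]
          refine ⟨hxF, ?_⟩
          simp only [Finset.mem_insert, Finset.mem_singleton] at hx
          rcases hx with h | h | h <;> subst h <;> omega
      rw [hfilt] at hev
      have h3 : ({a, b, c} : Finset ℕ).card = 3 := by
        rw [Finset.card_insert_of_notMem (by simp [hab, hac]),
            Finset.card_insert_of_notMem (by simp [hbc]), Finset.card_singleton]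
      rw [h3] at hev
      exact (by decide : ¬ Even 3) hev
    have h1abc : 1 = a ∨ 1 = b ∨ 1 = c := by
      have h1m : (1 : ℕ) ∈ ({0, n, a, b, c} : Finset ℕ) := hFeq ▸ h1F
      simp only [Finset.mem_insert, Finset.mem_singleton] at h1m
      omega
    rcases h1abc with h1 | h1 | h1
    · refine aux_two n hn F hGale b c hbc (by omega) (by omega) hb hc ?_
      rw [hFeq, ← h1]
      ext x
      simp only [Finset.mem_insert, Finset.mem_singleton]
      omega
    · refine aux_two n hn F hGale a c hac (by omega) (by omega) ha hc ?_
      rw [hFeq, ← h1]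
      ext x
      simp only [Finset.mem_insert, Finset.mem_singleton]
      omega
    · refine aux_two n hn F hGale a b hab (by omega) (by omega) ha hb ?_
      rw [hFeq, ← h1]
      ext x
      simp only [Finset.mem_insert, Finset.mem_singleton]
      omega
  · -- s = 3 : r = n - 3
    have hrn : r = n - 3 := by omega
    have hG : (F \ insert 0 (Finset.Icc (r + 1) n)).card = 1 := by
      rw [Finset.card_sdiff_of_subset hsub, hcard, hcard4]
      omega
    obtain ⟨a, hGeq⟩ := Finset.card_eq_one.mp hG
    have hFmem : ∀ x : ℕ, x ∈ F ↔ x = a ∨ x = 0 ∨ (r + 1 ≤ x ∧ x ≤ n) := by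
      intro x
      constructor
      · intro hx
        by_cases hxs : x ∈ insert 0 (Finset.Icc (r + 1) n)
        · simp only [Finset.mem_insert, Finset.mem_Icc] at hxs
          omega
        · have : x ∈ F \ insert 0 (Finset.Icc (r + 1) n) := Finset.mem_sdiff.mpr ⟨hx, hxs⟩
          rw [hGeq, Finset.mem_singleton] at this
          omega
      · rintro (h | h | h)
        · subst h
          have : x ∈ F \ insert 0 (Finset.Icc (r + 1) n) := by
            rw [hGeq]; exact Finset.mem_singleton_self x
          exact (Finset.mem_sdiff.mp this).1
        · exact h ▸ h0
        · exact hIcc (Finset.mem_Icc.mpr h)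
    have haF : a ∈ F := (hFmem a).mpr (Or.inl rfl)
    have haS : a ∉ insert 0 (Finset.Icc (r + 1) n) := by
      have : a ∈ F \ insert 0 (Finset.Icc (r + 1) n) := by
        rw [hGeq]; exact Finset.mem_singleton_self a
      exact (Finset.mem_sdiff.mp this).2
    have habound : 1 ≤ a ∧ a ≤ n - 4 := by
      simp only [Finset.mem_insert, Finset.mem_Icc] at haS
      have han : a ≤ n := hmemF a haF
      have har : a ≠ r := fun h => hr (h ▸ haF)
      omega
    have ha1 : a = 1 := by
      by_contra ha1
      have h1F : 1 ∉ F := by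
        rw [hFmem]
        omega
      have hrF : n - 3 ∉ F := hrn ▸ hr
      have hev := hGale 1 (n - 3) (by omega) (by omega) (by omega) h1F hrF
      have hfilt : (F.filter fun x => 1 < x ∧ x < n - 3) = {a} := by
        ext x
        rw [Finset.mem_filter, hFmem, Finset.mem_singleton]
        omega
      rw [hfilt] at hev
      simp at hev
    refine ⟨n - 2, by omega, le_refl _, ?_⟩
    ext x
    rw [hFmem]
    simp only [Finset.mem_insert, Finset.mem_singleton]
    omega
end
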